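/- If F is an n × n Ferrers diagram (n ≥ 2) such that (F,2) is MDS-constructible, then (F,3) is also MDS-constructible (assuming n ≥ 3 so that d = 3 is admissible). -/

import Mathlib

/-!
Row 1 and column `n` of a Ferrers diagram are full, so the diagonals `D_1, …, D_n` all meet `F`
and the `d = 2` diagonal sum is at most `|F| - n = κ(F,2)`, with equality only if `F` meets no
diagonal `D_r` with `r > n`, i.e. `i ≤ j` for every cell `(i,j) ∈ F`. For such `F` we have
`c_1 = 1`, `c_{n-1} ≤ n - 1`, `D_1 ∩ F = {(1,n)}` and `|D_r ∩ F| ≥ 2` for `2 ≤ r ≤ n`, which makes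
both `κ(F,3) = κ_1(F,3)` and the `d = 3` diagonal sum equal to `|F| - (2n - 1)`.
-/

/-- The `n × m` matrix board `[n] × [m]` (1-based). -/
def board (n m : ℕ) : Finset (ℕ × ℕ) := Finset.Icc 1 n ×ˢ Finset.Icc 1 m

/-- `F` is an `n × m` Ferrers diagram: contained in the board, contains `(1,1)` and `(n,m)`,
right-aligned and top-aligned. -/
def IsFerrers (n m : ℕ) (F : Finset (ℕ × ℕ)) : Prop :=
  F ⊆ board n m ∧ (1, 1) ∈ F ∧ (n, m) ∈ F ∧
  (∀ i j, (i, j) ∈ F → j < m → (i, j + 1) ∈ F) ∧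
  (∀ i j, (i, j) ∈ F → 1 < i → (i - 1, j) ∈ F)

/-- The `r`-th diagonal of the `n × m` board: `{(i,j) : j - i = m - r}`. -/
def diag (n m r : ℕ) : Finset (ℕ × ℕ) :=
  (board n m).filter (fun p => p.2 + r = p.1 + m)

/-- The height `c_t` of the `t`-th column of `F`. -/
def colH (F : Finset (ℕ × ℕ)) (t : ℕ) : ℕ := (F.filter (fun p => p.2 = t)).card

/-- `κ_j(F,d) = Σ_{t=1}^{m-d+1+j} max{c_t - j, 0}` (truncated subtraction). -/
def kappaJ (F : Finset (ℕ × ℕ)) (m d j : ℕ) : ℕ :=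
  ∑ t ∈ Finset.Icc 1 (m - d + 1 + j), (colH F t - j)

/-- `κ(F,d) = min_{0 ≤ j ≤ d-1} κ_j(F,d)`. -/
noncomputable def kappa (F : Finset (ℕ × ℕ)) (m d : ℕ) : ℕ :=
  sInf (kappaJ F m d '' Set.Iio d)

/-- `Σ_{i=1}^{m+n-1} max{0, |D_i ∩ F| - (d-1)}` (truncated subtraction). -/
def diagSum (n m : ℕ) (F : Finset (ℕ × ℕ)) (d : ℕ) : ℕ :=
  ∑ i ∈ Finset.Icc 1 (m + n - 1), ((diag n m i ∩ F).card - (d - 1))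

/-- The pair `(F,d)` is MDS-constructible. -/
def MDSConstructible (n m : ℕ) (F : Finset (ℕ × ℕ)) (d : ℕ) : Prop :=
  kappa F m d = diagSum n m F d

open Finset hiding diag

lemma mem_board {n m : ℕ} {p : ℕ × ℕ} :
    p ∈ board n m ↔ 1 ≤ p.1 ∧ p.1 ≤ n ∧ 1 ≤ p.2 ∧ p.2 ≤ m := by
  simp only [board, mem_product, mem_Icc]
  tauto

lemma mem_diag_inter {n m r : ℕ} {F : Finset (ℕ × ℕ)} (hF : F ⊆ board n m) {p : ℕ × ℕ} :
    p ∈ diag n m r ∩ F ↔ p ∈ F ∧ p.2 + r = p.1 + m := by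
  simp only [diag, mem_inter, mem_filter]
  exact ⟨fun h => ⟨h.2, h.1.2⟩, fun h => ⟨⟨hF h.1, h.2⟩, h.1⟩⟩

lemma sum_colH_eq_card {n m : ℕ} {F : Finset (ℕ × ℕ)} (hF : F ⊆ board n m) :
    ∑ t ∈ Icc 1 m, colH F t = F.card :=
  (card_eq_sum_card_fiberwise (f := Prod.snd) fun p hp => by
    have := mem_board.1 (hF hp)
    rw [mem_coe, mem_Icc]
    omega).symm

lemma sum_card_diag_inter_eq_card {n m : ℕ} {F : Finset (ℕ × ℕ)} (hF : F ⊆ board n m) :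
    ∑ r ∈ Icc 1 (m + n - 1), (diag n m r ∩ F).card = F.card := by
  rw [card_eq_sum_card_fiberwise (f := fun p => p.1 + m - p.2) (t := Icc 1 (m + n - 1))
    fun p hp => by
      have := mem_board.1 (hF hp)
      simp only [mem_coe, mem_Icc]
      omega]
  refine sum_congr rfl fun r _ => congrArg card (ext fun p => ?_)
  rw [mem_diag_inter hF, mem_filter]
  refine and_congr_right fun hp => ?_
  have := mem_board.1 (hF hp)
  constructor <;> intro <;> omega

lemma colH_le_of_forall_mem_le {n m t k : ℕ} {F : Finset (ℕ × ℕ)} (hF : F ⊆ board n m)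
    (h : ∀ i, (i, t) ∈ F → i ≤ k) : colH F t ≤ k := by
  calc colH F t ≤ (Icc 1 k ×ˢ {t}).card := card_le_card fun p hp => by
        obtain ⟨hpF, rfl⟩ := mem_filter.1 hp
        have := mem_board.1 (hF hpF)
        simp only [mem_product, mem_Icc, mem_singleton]
        exact ⟨⟨this.1, h p.1 hpF⟩, trivial⟩
    _ = k := by simp

lemma le_colH_of_forall_mem {t k : ℕ} {F : Finset (ℕ × ℕ)}
    (h : ∀ i, 1 ≤ i → i ≤ k → (i, t) ∈ F) : k ≤ colH F t := by
  calc k = (Icc 1 k ×ˢ {t}).card := by simp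
    _ ≤ colH F t := card_le_card fun ⟨i, t'⟩ hp => by
        simp only [mem_product, mem_Icc, mem_singleton] at hp
        obtain ⟨hi, rfl⟩ := hp
        exact mem_filter.2 ⟨h i hi.1 hi.2, rfl⟩

lemma kappa_eq_kappaJ {F : Finset (ℕ × ℕ)} {m d j : ℕ} (hj : j < d)
    (h : ∀ i < d, kappaJ F m d j ≤ kappaJ F m d i) : kappa F m d = kappaJ F m d j :=
  IsLeast.csInf_eq ⟨⟨j, hj, rfl⟩, by rintro _ ⟨i, hi, rfl⟩; exact h i hi⟩

lemma kappaJ_add_sum_min (F : Finset (ℕ × ℕ)) (m d j : ℕ) :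
    kappaJ F m d j + ∑ t ∈ Icc 1 (m - d + 1 + j), min (colH F t) j
      = ∑ t ∈ Icc 1 (m - d + 1 + j), colH F t := by
  rw [kappaJ, ← sum_add_distrib]
  exact sum_congr rfl fun _ _ => tsub_add_min

lemma diagSum_add_sum_min {n m : ℕ} {F : Finset (ℕ × ℕ)} (hF : F ⊆ board n m) (d : ℕ) :
    diagSum n m F d + ∑ r ∈ Icc 1 (m + n - 1), min (diag n m r ∩ F).card (d - 1) = F.card := by
  rw [diagSum, ← sum_add_distrib, ← sum_card_diag_inter_eq_card hF]
  exact sum_congr rfl fun _ _ => tsub_add_min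

namespace IsFerrers

variable {n m : ℕ} {F : Finset (ℕ × ℕ)} (hF : IsFerrers n m F)
include hF

lemma first_row_mem {j : ℕ} (hj : 1 ≤ j) (hjm : j ≤ m) : (1, j) ∈ F := by
  induction j, hj using Nat.le_induction with
  | base => exact hF.2.1
  | succ j hj ih => exact hF.2.2.2.1 1 j (ih (by omega)) (by omega)

lemma last_col_mem {i : ℕ} (hi : 1 ≤ i) (hin : i ≤ n) : (i, m) ∈ F := by
  refine Nat.decreasingInduction (motive := fun i _ => 1 ≤ i → (i, m) ∈ F)
    (fun i _ ih hi => ?_) (fun _ => hF.2.2.1) hin hi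
  simpa using hF.2.2.2.2 (i + 1) m (ih (by omega)) (by omega)

lemma one_le_colH {t : ℕ} (ht : 1 ≤ t) (htm : t ≤ m) : 1 ≤ colH F t :=
  le_colH_of_forall_mem fun i hi hi' => (show 1 = i by omega) ▸ hF.first_row_mem ht htm

lemma colH_last : colH F m = n :=
  le_antisymm (colH_le_of_forall_mem_le hF.1 fun _ hi => (mem_board.1 (hF.1 hi)).2.1)
    (le_colH_of_forall_mem fun _ hi hin => hF.last_col_mem hi hin)

lemma diag_one_inter : diag n m 1 ∩ F = {(1, m)} := by
  ext p
  rw [mem_diag_inter hF.1, mem_singleton]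
  constructor
  · rintro ⟨hp, h⟩
    have := mem_board.1 (hF.1 hp)
    ext <;> omega
  · rintro rfl
    exact ⟨hF.first_row_mem (mem_board.1 (hF.1 hF.2.2.1)).2.2.1 le_rfl, by simp [add_comm]⟩

lemma one_le_card_diag_inter {r : ℕ} (hr : 1 ≤ r) (hrm : r ≤ m) :
    1 ≤ (diag n m r ∩ F).card :=
  card_pos.2 ⟨(1, m + 1 - r),
    (mem_diag_inter hF.1).2 ⟨hF.first_row_mem (by omega) (by omega), by simp only; omega⟩⟩

lemma two_le_card_diag_inter {r : ℕ} (hr : 2 ≤ r) (hrn : r ≤ n) (hrm : r ≤ m) :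
    2 ≤ (diag n m r ∩ F).card := by
  have hsub : {(1, m + 1 - r), (r, m)} ⊆ diag n m r ∩ F := by
    intro p hp
    rw [mem_insert, mem_singleton] at hp
    rw [mem_diag_inter hF.1]
    rcases hp with rfl | rfl
    · exact ⟨hF.first_row_mem (by omega) (by omega), by simp only; omega⟩
    · exact ⟨hF.last_col_mem (by omega) hrn, add_comm _ _⟩
  calc 2 = ({(1, m + 1 - r), (r, m)} : Finset (ℕ × ℕ)).card :=
        (card_pair fun h => by simp only [Prod.mk.injEq] at h; omega).symm
    _ ≤ _ := card_le_card hsub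

lemma kappaJ_one_add {d : ℕ} (hd : 2 ≤ d) (hdm : d ≤ m) :
    kappaJ F m d 1 + (m - d + 2) = ∑ t ∈ Icc 1 (m - d + 2), colH F t := by
  have h := kappaJ_add_sum_min F m d 1
  rwa [sum_congr rfl fun t ht => min_eq_right (hF.one_le_colH (mem_Icc.1 ht).1 (by
    have := (mem_Icc.1 ht).2; omega)), sum_const, Nat.card_Icc, smul_eq_mul, mul_one,
    Nat.add_sub_cancel] at h

lemma sum_colH_Icc_sub_one_add (hm : 1 ≤ m) :
    ∑ t ∈ Icc 1 (m - 1), colH F t + n = F.card := by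
  obtain ⟨k, rfl⟩ : ∃ k, m = k + 1 := ⟨m - 1, by omega⟩
  rw [Nat.add_sub_cancel, ← hF.colH_last, ← sum_Icc_succ_top (by omega), sum_colH_eq_card hF.1]

end IsFerrers

section Square

variable {n : ℕ} {F : Finset (ℕ × ℕ)}

lemma IsFerrers.kappa_two_add (hF : IsFerrers n n F) (hn : 2 ≤ n) : kappa F n 2 + n = F.card := by
  have h0 : kappaJ F n 2 0 + n = F.card := by
    rw [kappaJ, show n - 2 + 1 + 0 = n - 1 by omega]
    simpa using hF.sum_colH_Icc_sub_one_add (by omega)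
  have h1 : kappaJ F n 2 1 + n = F.card := by
    have := hF.kappaJ_one_add le_rfl hn
    rwa [show n - 2 + 2 = n by omega, sum_colH_eq_card hF.1] at this
  rw [kappa_eq_kappaJ (j := 0) (by norm_num) fun i hi => by interval_cases i <;> omega]
  exact h0

lemma IsFerrers.le_of_mem_of_mdsConstructible_two (hF : IsFerrers n n F) (hn : 2 ≤ n)
    (h2 : MDSConstructible n n F 2) {p : ℕ × ℕ} (hp : p ∈ F) : p.1 ≤ p.2 := by
  have hdiag : diagSum n n F 2 + ∑ r ∈ Icc 1 (n + n - 1), min (diag n n r ∩ F).card 1 = F.card :=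
    diagSum_add_sum_min hF.1 2
  have hupper : ∑ r ∈ Icc 1 n, min (diag n n r ∩ F).card 1 = n := by
    rw [sum_congr rfl fun r hr => min_eq_right
      (hF.one_le_card_diag_inter (mem_Icc.1 hr).1 (mem_Icc.1 hr).2)]
    simp
  have hlower : ∑ r ∈ Icc 1 (n + n - 1) \ Icc 1 n, min (diag n n r ∩ F).card 1 = 0 := by
    have := sum_sdiff (f := fun r => min (diag n n r ∩ F).card 1)
      (Icc_subset_Icc_right (by omega) : Icc 1 n ⊆ Icc 1 (n + n - 1))
    have := hF.kappa_two_add hn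
    rw [MDSConstructible] at h2
    omega
  by_contra! hlt
  have hboard := mem_board.1 (hF.1 hp)
  have hr : p.1 + n - p.2 ∈ Icc 1 (n + n - 1) \ Icc 1 n := by
    simp only [mem_sdiff, mem_Icc]
    omega
  have hpos : 0 < (diag n n (p.1 + n - p.2) ∩ F).card :=
    card_pos.2 ⟨p, (mem_diag_inter hF.1).2 ⟨hp, by omega⟩⟩
  have := sum_eq_zero_iff.1 hlower _ hr
  omega

end Square

section UpperTriangular

variable {n m : ℕ} {F : Finset (ℕ × ℕ)} (hup : ∀ p ∈ F, p.1 ≤ p.2)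
include hup

lemma colH_le_self_of_forall_le (hF : F ⊆ board n m) (t : ℕ) : colH F t ≤ t :=
  colH_le_of_forall_mem_le hF fun _ hi => hup _ hi

lemma card_diag_inter_eq_zero_of_forall_le {r : ℕ} (hr : m < r) : (diag n m r ∩ F).card = 0 := by
  refine card_eq_zero.2 (eq_empty_of_forall_notMem fun p hp => ?_)
  obtain ⟨hpd, hpF⟩ := mem_inter.1 hp
  have := (mem_filter.1 hpd).2
  have := hup p hpF
  omega

lemma sum_min_colH_two_le_of_forall_le (hF : F ⊆ board n m) (hm : 1 ≤ m) :
    ∑ t ∈ Icc 1 m, min (colH F t) 2 ≤ 2 * m - 1 := by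
  rw [← add_sum_Ioc_eq_sum_Icc hm]
  have hfirst : min (colH F 1) 2 ≤ 1 :=
    (min_le_left _ _).trans (colH_le_self_of_forall_le hup hF 1)
  have hrest : ∑ t ∈ Ioc 1 m, min (colH F t) 2 ≤ #(Ioc 1 m) • 2 :=
    sum_le_card_nsmul _ _ _ fun _ _ => min_le_right _ _
  rw [Nat.card_Ioc, smul_eq_mul] at hrest
  omega

lemma IsFerrers.kappa_three_add (hF : IsFerrers n n F) (hn : 3 ≤ n) :
    kappa F n 3 + (2 * n - 1) = F.card := by
  have hpred := hF.sum_colH_Icc_sub_one_add (by omega)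
  have hsplit :
      ∑ t ∈ Icc 1 (n - 2), colH F t + colH F (n - 1) = ∑ t ∈ Icc 1 (n - 1), colH F t := by
    rw [show n - 1 = n - 2 + 1 by omega, sum_Icc_succ_top (by omega)]
  have hlast := colH_le_self_of_forall_le hup hF.1 (n - 1)
  have h0 : kappaJ F n 3 0 = ∑ t ∈ Icc 1 (n - 2), colH F t := by
    rw [kappaJ, show n - 3 + 1 + 0 = n - 2 by omega]
    simp only [Nat.sub_zero]
  have h1 := hF.kappaJ_one_add (d := 3) (by norm_num) hn
  rw [show n - 3 + 2 = n - 1 by omega] at h1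
  have h2 := kappaJ_add_sum_min F n 3 2
  rw [show n - 3 + 1 + 2 = n by omega, sum_colH_eq_card hF.1] at h2
  have hmin := sum_min_colH_two_le_of_forall_le hup hF.1 (by omega)
  rw [kappa_eq_kappaJ (j := 1) (by norm_num) fun i hi => by interval_cases i <;> omega]
  omega

lemma IsFerrers.diagSum_three_add (hF : IsFerrers n n F) (hn : 1 ≤ n) :
    diagSum n n F 3 + (2 * n - 1) = F.card := by
  have hmin : ∑ r ∈ Icc 1 (n + n - 1), min (diag n n r ∩ F).card 2 = 2 * n - 1 := by
    rw [← sum_subset (Icc_subset_Icc_right (by omega) : Icc 1 n ⊆ Icc 1 (n + n - 1))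
      fun r hr hrn => by
        rw [card_diag_inter_eq_zero_of_forall_le hup (by simp only [mem_Icc] at hr hrn; omega)]
        rfl,
      ← add_sum_Ioc_eq_sum_Icc hn, hF.diag_one_inter, card_singleton,
      sum_congr rfl fun r hr => min_eq_right (hF.two_le_card_diag_inter
        (by simp only [mem_Ioc] at hr; omega) (mem_Ioc.1 hr).2 (mem_Ioc.1 hr).2)]
    simp only [sum_const, Nat.card_Ioc, smul_eq_mul]
    omega
  rw [← hmin]
  exact diagSum_add_sum_min hF.1 3

end UpperTriangular

theorem mds_constructible_two_implies_three (n : ℕ) (hn : 3 ≤ n)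
    (F : Finset (ℕ × ℕ)) (hF : IsFerrers n n F)
    (h2 : MDSConstructible n n F 2) : MDSConstructible n n F 3 := by
  have hup : ∀ p ∈ F, p.1 ≤ p.2 := fun _ => hF.le_of_mem_of_mdsConstructible_two (by omega) h2
  have hkappa := hF.kappa_three_add hup hn
  have hdiag := hF.diagSum_three_add hup (by omega)
  rw [MDSConstructible]
  omega
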